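/- arXiv:2402.06380 — 3 statements merged into one kernel-verified Lean document; each statement's English description precedes it below -/
import Mathlib

section
/- Let (X,Y) be a centered bivariate Gaussian with positive definite covariance matrix [[σ_x², ρ_{xy}],[ρ_{xy}, σ_y²]], let (X^{(1)},Y^{(1)}),…,(X^{(n)},Y^{(n)}) be i.i.d. copies, and set ρ̂_{xy} = (1/n)∑_{i=1}^n X^{(i)}Y^{(i)}. Then for every t ∈ (0,1), Pr(|ρ̂_{xy} − ρ_{xy}| ≥ t·σ_x·σ_y) ≤ 2·exp(−n t²/38). -/
open MeasureTheory ProbabilityTheory Matrix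

/-- The centered Gaussian measure on `ι → ℝ` with covariance matrix `S`,
defined via its density with respect to Lebesgue measure. -/
noncomputable def gaussianOfCov {ι : Type*} [Fintype ι] [DecidableEq ι] (S : Matrix ι ι ℝ) :
    Measure (ι → ℝ) :=
  (volume : Measure (ι → ℝ)).withDensity fun x =>
    ENNReal.ofReal ((Real.sqrt ((2 * Real.pi) ^ (Fintype.card ι) * S.det))⁻¹ *
      Real.exp (-(x ⬝ᵥ (S⁻¹ *ᵥ x)) / 2))

/-- Kullback–Leibler divergence `∫ log (dP/dQ) dP`. -/
noncomputable def klDiv {E : Type*} [MeasurableSpace E] (P Q : Measure E) : ℝ :=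
  ∫ x, MeasureTheory.llr P Q x ∂P

/-- A positive definite covariance matrix is `T`-structured for an undirected
graph `T` if its inverse vanishes off the diagonal outside the edges of `T`. -/
def TStructured {d : ℕ} (T : SimpleGraph (Fin d)) (S : Matrix (Fin d) (Fin d) ℝ) : Prop :=
  S.PosDef ∧ ∀ j k, j ≠ k → ¬ T.Adj j k → S⁻¹ j k = 0

/-- Infimum of KL divergences from `P` to `T`-structured centered Gaussians. -/
noncomputable def treeKL {d : ℕ} (P : Measure (Fin d → ℝ)) (T : SimpleGraph (Fin d)) : ℝ :=
  sInf {r | ∃ S : Matrix (Fin d) (Fin d) ℝ, TStructured T S ∧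
    r = klDiv P (gaussianOfCov S)}

/-- Minimum over trees of `treeKL`. -/
noncomputable def bestTreeKL {d : ℕ} (P : Measure (Fin d → ℝ)) : ℝ :=
  sInf {r | ∃ T : SimpleGraph (Fin d), T.IsTree ∧ r = treeKL P T}

instance {d : ℕ} : MeasurableSpace (SimpleGraph (Fin d)) := ⊤

/-- Sample covariance matrix. -/
noncomputable def sampleCov {n d : ℕ} (x : Fin n → Fin d → ℝ) :
    Matrix (Fin d) (Fin d) ℝ :=
  fun j k => (1 / (n : ℝ)) * ∑ i, x i j * x i k

/-- `condMatrix S C x y = S x y − S_{xC} S_{CC}⁻¹ S_{Cy}`. -/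
noncomputable def condMatrix {d : ℕ} (S : Matrix (Fin d) (Fin d) ℝ)
    (C : Finset (Fin d)) : Matrix (Fin d) (Fin d) ℝ :=
  fun x y => S x y -
    ∑ a : C, ∑ b : C, S x a * ((Matrix.of fun p q : C => S p q)⁻¹ a b) * S b y

/-- Partial correlation of `j` and `k` given the variables in `C`. -/
noncomputable def pcorr {d : ℕ} (S : Matrix (Fin d) (Fin d) ℝ) (j k : Fin d)
    (C : Finset (Fin d)) : ℝ :=
  condMatrix S C j k / Real.sqrt (condMatrix S C j j * condMatrix S C k k)

/-- The skeleton of a directed graph `E` on `Fin d`. -/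
def skeleton {d : ℕ} (E : Fin d → Fin d → Prop) : SimpleGraph (Fin d) where
  Adj j k := j ≠ k ∧ (E j k ∨ E k j)
  symm := ⟨fun j k h => ⟨h.1.symm, h.2.symm⟩⟩
  loopless := ⟨fun j h => h.1 rfl⟩

/-- A polytree: a DAG whose skeleton is a tree. -/
def IsPolytree {d : ℕ} (E : Fin d → Fin d → Prop) : Prop :=
  (∀ j, ¬ E j j) ∧ (∀ j k, ¬ (E j k ∧ E k j)) ∧ (skeleton E).IsTree

/-- A directed tree: a polytree with a root with no parent and all other
nodes having exactly one parent. -/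
def IsDirectedTree {d : ℕ} (E : Fin d → Fin d → Prop) : Prop :=
  IsPolytree E ∧ ∃ r : Fin d, (∀ j, ¬ E j r) ∧ ∀ k, k ≠ r → ∃! j, E j k

/-- `N(0,Σ)` is Markov to the DAG `E` if `Σ = (I−A)⁻¹ D (I−A)⁻ᵀ` with the
support of `A` contained in the edges of `E`. -/
def MarkovTo {d : ℕ} (S : Matrix (Fin d) (Fin d) ℝ)
    (E : Fin d → Fin d → Prop) : Prop :=
  ∃ (A : Matrix (Fin d) (Fin d) ℝ) (D : Fin d → ℝ),
    (∀ k j, A k j ≠ 0 → E j k) ∧ (∀ k, 0 < D k) ∧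
    S = (1 - A)⁻¹ * Matrix.diagonal D * ((1 - A)⁻¹)ᵀ

/-- `c`-strong tree-faithfulness of `N(0,Σ)` to the polytree `E`. -/
def StrongTreeFaithful {d : ℕ} (c : ℝ) (S : Matrix (Fin d) (Fin d) ℝ)
    (E : Fin d → Fin d → Prop) : Prop :=
  (∀ j k, (skeleton E).Adj j k →
      c ≤ pcorr S j k ∅ ∧ ∀ ℓ, ℓ ≠ j → ℓ ≠ k → c ≤ pcorr S j k {ℓ}) ∧
  (∀ j ℓ k, E j ℓ → E k ℓ → j ≠ k → ¬ (skeleton E).Adj j k →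
      c ≤ pcorr S j k {ℓ})

/-!
Chernoff's method. Completing the square in the density gives, for one sample,
`E exp (ℓ X Y) = ((1 - ℓ ρ)² - ℓ² σx² σy²)^(-1/2)`. For `ℓ = ±t / (10 σx σy)` and
`r = ±ρ / (σx σy)` the radicand factors as `(1 - u₁)(1 - u₂)` with `|uᵢ| ≤ t / 5`, and
`log (1 - u) ≥ -u - 2u²` bounds the Chernoff factor by `exp (-t² / 38)` per sample.
Independence raises this to the `n`-th power, and a union bound over the two tails gives the
factor `2`.
-/

open Real

lemma measure_ge_le_exp_mul_lintegral_exp {α : Type*} [MeasurableSpace α] (ν : Measure α)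
    {g : α → ℝ} (hg : Measurable g) {l : ℝ} (hl : 0 ≤ l) (c : ℝ) :
    ν {x | c ≤ g x} ≤
      ENNReal.ofReal (exp (-(l * c))) * ∫⁻ x, ENNReal.ofReal (exp (l * g x)) ∂ν := by
  calc ν {x | c ≤ g x} = ∫⁻ _ in {x | c ≤ g x}, 1 ∂ν := (setLIntegral_one _).symm
    _ ≤ ∫⁻ x in {x | c ≤ g x},
          ENNReal.ofReal (exp (-(l * c))) * ENNReal.ofReal (exp (l * g x)) ∂ν := by
        refine setLIntegral_mono (by fun_prop) fun x hx => ?_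
        rw [← ENNReal.ofReal_mul (exp_pos _).le, ← exp_add, ENNReal.one_le_ofReal]
        exact one_le_exp (by nlinarith [hx.out])
    _ ≤ ∫⁻ x, ENNReal.ofReal (exp (-(l * c))) * ENNReal.ofReal (exp (l * g x)) ∂ν :=
        setLIntegral_le_lintegral _ _
    _ = _ := lintegral_const_mul _ (by fun_prop)

lemma lintegral_pi_prod_eq_pow {ι E : Type*} [Fintype ι] [MeasurableSpace E] (μ : Measure E)
    [IsProbabilityMeasure μ] {f : E → ENNReal} (hf : Measurable f) :
    ∫⁻ x : ι → E, ∏ i, f (x i) ∂Measure.pi (fun _ => μ) =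
      (∫⁻ z, f z ∂μ) ^ Fintype.card ι := by
  refine (lintegral_prod_eq_prod_lintegral_of_indepFun Finset.univ (fun i (x : ι → E) => f (x i))
    (iIndepFun_pi (X := fun _ => f) fun _ => hf.aemeasurable)
      fun i => hf.comp (measurable_pi_apply i)).trans ?_
  simp_rw [(measurePreserving_eval (fun _ : ι => μ) _).lintegral_comp hf]
  exact Finset.prod_const _

lemma measure_pi_sum_ge_le_pow {E : Type*} [MeasurableSpace E] (μ : Measure E)
    [IsProbabilityMeasure μ] {g : E → ℝ} (hg : Measurable g) {l : ℝ} (hl : 0 ≤ l) (c : ℝ)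
    (n : ℕ) :
    Measure.pi (fun _ : Fin n => μ) {x | n * c ≤ ∑ i, g (x i)} ≤
      (ENNReal.ofReal (exp (-(l * c))) * ∫⁻ z, ENNReal.ofReal (exp (l * g z)) ∂μ) ^ n := by
  have hprod : ∀ x : Fin n → E, ENNReal.ofReal (exp (l * ∑ i, g (x i))) =
      ∏ i, ENNReal.ofReal (exp (l * g (x i))) := fun x => by
    rw [Finset.mul_sum, exp_sum, ENNReal.ofReal_prod_of_nonneg fun i _ => (exp_pos _).le]
  refine (measure_ge_le_exp_mul_lintegral_exp _ (by fun_prop) hl _).trans_eq ?_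
  rw [mul_pow, ← ENNReal.ofReal_pow (exp_pos _).le, ← exp_nat_mul]
  simp_rw [hprod]
  rw [lintegral_pi_prod_eq_pow μ (f := fun z => ENNReal.ofReal (exp (l * g z))) (by fun_prop),
    Fintype.card_fin]
  congr 3
  ring

lemma lintegral_ofReal_exp_neg_mul_sub_sq {c : ℝ} (hc : 0 < c) (m : ℝ) :
    ∫⁻ x : ℝ, ENNReal.ofReal (exp (-c * (x - m) ^ 2)) = ENNReal.ofReal (sqrt (π / c)) := by
  rw [← ofReal_integral_eq_lintegral_ofReal _ (.of_forall fun x => (exp_pos _).le)]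
  · rw [integral_sub_right_eq_self (fun x => exp (-c * x ^ 2)) m, integral_gaussian]
  · simpa using (integrable_exp_neg_mul_sq hc).comp_sub_right m

lemma lintegral_lintegral_ofReal_exp_neg_mul_sub_sq {p q : ℝ} (hp : 0 < p) (hq : 0 < q)
    (m : ℝ) :
    ∫⁻ y, ∫⁻ x, ENNReal.ofReal (exp (-p * (x - m * y) ^ 2 - q * y ^ 2)) =
      ENNReal.ofReal (π / sqrt (p * q)) := by
  have hsplit : ∀ x y : ℝ, ENNReal.ofReal (exp (-p * (x - m * y) ^ 2 - q * y ^ 2)) =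
      ENNReal.ofReal (exp (-p * (x - m * y) ^ 2)) * ENNReal.ofReal (exp (-q * y ^ 2)) := by
    intro x y
    rw [← ENNReal.ofReal_mul (exp_pos _).le, ← exp_add, neg_mul q, sub_eq_add_neg]
  simp_rw [hsplit]
  have hinner : ∀ y : ℝ, ∫⁻ x, ENNReal.ofReal (exp (-p * (x - m * y) ^ 2)) *
      ENNReal.ofReal (exp (-q * y ^ 2)) =
        ENNReal.ofReal (sqrt (π / p)) * ENNReal.ofReal (exp (-q * y ^ 2)) := fun y => by
    rw [lintegral_mul_const _ (by fun_prop), lintegral_ofReal_exp_neg_mul_sub_sq hp]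
  simp_rw [hinner]
  rw [lintegral_const_mul _ (by fun_prop)]
  have houter := lintegral_ofReal_exp_neg_mul_sub_sq hq 0
  simp only [sub_zero] at houter
  rw [houter, ← ENNReal.ofReal_mul (by positivity), ← sqrt_mul (by positivity),
    div_mul_div_comm, sqrt_div (mul_self_nonneg π), sqrt_mul_self pi_pos.le]

lemma lintegral_fin_two (f : ℝ → ℝ → ENNReal) (hf : Measurable (Function.uncurry f)) :
    ∫⁻ v : Fin 2 → ℝ, f (v 0) (v 1) = ∫⁻ y, ∫⁻ x, f x y := by
  rw [volume_pi]
  exact ((measurePreserving_piFinTwo fun _ : Fin 2 => (volume : Measure ℝ)).lintegral_comp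
    hf).trans (lintegral_prod_symm' (Function.uncurry f) hf)

lemma dotProduct_inv_fin_two_mulVec (a b ρ : ℝ) (v : Fin 2 → ℝ) :
    v ⬝ᵥ (!![a, ρ; ρ, b]⁻¹ *ᵥ v) =
      (b * v 0 ^ 2 - 2 * ρ * v 0 * v 1 + a * v 1 ^ 2) / (a * b - ρ ^ 2) := by
  rw [inv_def, adjugate_fin_two, det_fin_two_of, Ring.inverse_eq_inv']
  simp only [dotProduct, mulVec, of_apply, cons_val', cons_val_one, cons_val_fin_one,
    cons_val_zero, Matrix.smul_apply, smul_eq_mul, Fin.sum_univ_two]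
  ring

lemma neg_quadForm_div_two_add_mul_eq {a b ρ ℓ : ℝ} (hb : b ≠ 0) (hd : a * b - ρ ^ 2 ≠ 0)
    (x y : ℝ) :
    -((b * x ^ 2 - 2 * ρ * x * y + a * y ^ 2) / (a * b - ρ ^ 2)) / 2 + ℓ * (x * y) =
      -(b / (2 * (a * b - ρ ^ 2))) * (x - (ρ + ℓ * (a * b - ρ ^ 2)) / b * y) ^ 2 -
        ((1 - ℓ * ρ) ^ 2 - ℓ ^ 2 * (a * b)) / (2 * b) * y ^ 2 := by
  have hd' : b * a - ρ ^ 2 ≠ 0 := by rwa [mul_comm]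
  field_simp
  ring

lemma lintegral_exp_mul_mul_gaussianOfCov_fin_two {a b ρ ℓ : ℝ} (hb : 0 < b)
    (hd : ρ ^ 2 < a * b) (hD : 0 < (1 - ℓ * ρ) ^ 2 - ℓ ^ 2 * (a * b)) :
    ∫⁻ v, ENNReal.ofReal (exp (ℓ * (v 0 * v 1))) ∂gaussianOfCov !![a, ρ; ρ, b] =
      ENNReal.ofReal (sqrt ((1 - ℓ * ρ) ^ 2 - ℓ ^ 2 * (a * b)))⁻¹ := by
  set d := a * b - ρ ^ 2
  set D := (1 - ℓ * ρ) ^ 2 - ℓ ^ 2 * (a * b)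
  have hd0 : 0 < d := by linarith
  have hpt : ∀ v : Fin 2 → ℝ,
      ENNReal.ofReal ((sqrt ((2 * π) ^ Fintype.card (Fin 2) * (!![a, ρ; ρ, b]).det))⁻¹ *
          exp (-(v ⬝ᵥ (!![a, ρ; ρ, b]⁻¹ *ᵥ v)) / 2)) *
          ENNReal.ofReal (exp (ℓ * (v 0 * v 1))) =
        ENNReal.ofReal (sqrt ((2 * π) ^ 2 * d))⁻¹ * ENNReal.ofReal (exp
          (-(b / (2 * d)) * (v 0 - (ρ + ℓ * d) / b * v 1) ^ 2 - D / (2 * b) * v 1 ^ 2)) := by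
    intro v
    rw [← ENNReal.ofReal_mul (by positivity), ← ENNReal.ofReal_mul (by positivity), mul_assoc,
      ← exp_add, dotProduct_inv_fin_two_mulVec,
      neg_quadForm_div_two_add_mul_eq hb.ne' hd0.ne', det_fin_two_of, Fintype.card_fin, ← sq ρ]
  rw [gaussianOfCov, lintegral_withDensity_eq_lintegral_mul _ (by fun_prop) (by fun_prop)]
  simp only [Pi.mul_apply, hpt]
  rw [lintegral_const_mul _ (by fun_prop), lintegral_fin_two (fun x y => ENNReal.ofReal (exp
      (-(b / (2 * d)) * (x - (ρ + ℓ * d) / b * y) ^ 2 - D / (2 * b) * y ^ 2))) (by fun_prop),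
    lintegral_lintegral_ofReal_exp_neg_mul_sub_sq (by positivity) (by positivity),
    ← ENNReal.ofReal_mul (by positivity)]
  congr 1
  have hpq : b / (2 * d) * (D / (2 * b)) = D / (2 ^ 2 * d) := by field_simp
  rw [hpq, sqrt_div hD.le, sqrt_mul (by positivity), sqrt_mul (by positivity),
    sqrt_sq (by positivity), sqrt_sq (by positivity)]
  have : sqrt d ≠ 0 := (sqrt_pos.2 hd0).ne'
  have : sqrt D ≠ 0 := (sqrt_pos.2 hD).ne'
  field_simp

lemma isProbabilityMeasure_gaussianOfCov_fin_two {a b ρ : ℝ} (hb : 0 < b) (hd : ρ ^ 2 < a * b) :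
    IsProbabilityMeasure (gaussianOfCov !![a, ρ; ρ, b]) := by
  have h := lintegral_exp_mul_mul_gaussianOfCov_fin_two (ℓ := 0) hb hd (by norm_num)
  norm_num at h
  exact ⟨h⟩

lemma exp_neg_sub_two_mul_sq_le_one_sub {u : ℝ} (hu : |u| ≤ 1 / 2) :
    exp (-u - 2 * u ^ 2) ≤ 1 - u := by
  have hlog := abs_log_sub_add_sum_range_le (hu.trans_lt (by norm_num)) 1
  simp only [Finset.sum_range_one, zero_add, pow_one, Nat.cast_zero, div_one] at hlog
  have hsq : |u| ^ 2 / (1 - |u|) ≤ 2 * u ^ 2 := by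
    rw [div_le_iff₀ (by linarith), sq_abs]
    nlinarith [sq_nonneg u]
  have hlower : -u - 2 * u ^ 2 ≤ log (1 - u) := by
    linarith [neg_abs_le (u + log (1 - u))]
  calc exp (-u - 2 * u ^ 2) ≤ exp (log (1 - u)) := exp_le_exp.2 hlower
    _ = 1 - u := exp_log (by linarith [le_abs_self u])

lemma sq_one_sub_mul_sub_sq_pos {r t : ℝ} (hr : |r| ≤ 1) (ht0 : 0 ≤ t) (ht1 : t ≤ 1) :
    0 < (1 - t / 10 * r) ^ 2 - (t / 10) ^ 2 := by
  obtain ⟨hr0, hr1⟩ := abs_le.1 hr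
  have h : 9 / 10 ≤ 1 - t / 10 * r := by nlinarith
  nlinarith

lemma exp_neg_mul_add_le_exp_mul_sqrt {r t : ℝ} (hr : |r| ≤ 1) (ht0 : 0 ≤ t) (ht1 : t ≤ 1) :
    exp (-(t / 10 * (r + t))) ≤
      exp (-t ^ 2 / 38) * sqrt ((1 - t / 10 * r) ^ 2 - (t / 10) ^ 2) := by
  obtain ⟨hr0, hr1⟩ := abs_le.1 hr
  have hr2 : t ^ 2 * r ^ 2 ≤ t ^ 2 :=
    mul_le_of_le_one_right (sq_nonneg t) ((sq_le_one_iff_abs_le_one r).2 hr)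
  have e₁ := exp_neg_sub_two_mul_sq_le_one_sub (u := t / 10 * (r + 1))
    (abs_le.2 ⟨by nlinarith, by nlinarith⟩)
  have e₂ := exp_neg_sub_two_mul_sq_le_one_sub (u := t / 10 * (r - 1))
    (abs_le.2 ⟨by nlinarith, by nlinarith⟩)
  have hfactor : (1 - t / 10 * r) ^ 2 - (t / 10) ^ 2 =
      (1 - t / 10 * (r + 1)) * (1 - t / 10 * (r - 1)) := by ring
  have hsq : exp (-(t / 10 * (r + t))) ^ 2 ≤
      (exp (-t ^ 2 / 38) * sqrt ((1 - t / 10 * r) ^ 2 - (t / 10) ^ 2)) ^ 2 := by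
    rw [mul_pow, sq_sqrt (sq_one_sub_mul_sub_sq_pos hr ht0 ht1).le, hfactor,
      ← exp_nat_mul, ← exp_nat_mul]
    calc exp (2 * -(t / 10 * (r + t)))
        ≤ exp (2 * (-t ^ 2 / 38)) * (exp (-(t / 10 * (r + 1)) - 2 * (t / 10 * (r + 1)) ^ 2) *
            exp (-(t / 10 * (r - 1)) - 2 * (t / 10 * (r - 1)) ^ 2)) := by
          rw [← exp_add, ← exp_add]
          -- for `u = t (r ± 1) / 10`: `∑ u = t r / 5`, `2 ∑ u² ≤ 2 t² / 25 ≤ t² / 5 - t² / 19`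
          exact exp_le_exp.2 (by nlinarith)
      _ ≤ exp (2 * (-t ^ 2 / 38)) * ((1 - t / 10 * (r + 1)) * (1 - t / 10 * (r - 1))) := by
          gcongr
          nlinarith
      _ = _ := by push_cast; ring
  exact le_of_sq_le_sq hsq (by positivity)

lemma pi_gaussianOfCov_fin_two_tail {σx σy ρ ε t : ℝ} (hσx : 0 < σx) (hσy : 0 < σy)
    (hρ : ρ ^ 2 < σx ^ 2 * σy ^ 2) (hε : |ε| = 1) (ht0 : 0 ≤ t) (ht1 : t ≤ 1) (n : ℕ) :
    Measure.pi (fun _ : Fin n => gaussianOfCov !![σx ^ 2, ρ; ρ, σy ^ 2])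
        {x | n * (t * σx * σy + ε * ρ) ≤ ∑ i, ε * (x i 0 * x i 1)} ≤
      ENNReal.ofReal (exp (-n * t ^ 2 / 38)) := by
  have := isProbabilityMeasure_gaussianOfCov_fin_two (by positivity) hρ
  have hs : 0 < σx * σy := mul_pos hσx hσy
  have hε2 : ε ^ 2 = 1 := by rw [← sq_abs, hε, one_pow]
  set r := ε * ρ / (σx * σy)
  have hr : |r| ≤ 1 := by
    rw [abs_div, abs_mul, hε, one_mul, abs_of_pos hs, div_le_one hs]
    exact (abs_lt_of_sq_lt_sq (by rwa [mul_pow]) hs.le).le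
  set l := t / (10 * (σx * σy))
  have hradicand : (1 - l * ε * ρ) ^ 2 - (l * ε) ^ 2 * (σx ^ 2 * σy ^ 2) =
      (1 - t / 10 * r) ^ 2 - (t / 10) ^ 2 := by
    simp only [l, r]
    field_simp
    rw [hε2]
    ring
  have hmgf := lintegral_exp_mul_mul_gaussianOfCov_fin_two (ℓ := l * ε) (by positivity) hρ
    (hradicand ▸ sq_one_sub_mul_sub_sq_pos hr ht0 ht1)
  rw [hradicand] at hmgf
  simp_rw [mul_assoc l ε] at hmgf
  refine (measure_pi_sum_ge_le_pow _ (g := fun v : Fin 2 → ℝ => ε * (v 0 * v 1)) (by fun_prop)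
    (l := l) (by positivity) _ n).trans ?_
  rw [hmgf, ← ENNReal.ofReal_mul (exp_pos _).le]
  calc ENNReal.ofReal (exp (-(l * (t * σx * σy + ε * ρ))) *
        (sqrt ((1 - t / 10 * r) ^ 2 - (t / 10) ^ 2))⁻¹) ^ n
      = ENNReal.ofReal
          (exp (-(t / 10 * (r + t))) / sqrt ((1 - t / 10 * r) ^ 2 - (t / 10) ^ 2)) ^ n := by
        rw [div_eq_mul_inv]
        congr 5
        simp only [l, r]
        field_simp
        ring
    _ ≤ ENNReal.ofReal (exp (-t ^ 2 / 38)) ^ n := by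
        gcongr
        rw [div_le_iff₀ (sqrt_pos.2 (sq_one_sub_mul_sub_sq_pos hr ht0 ht1))]
        exact exp_neg_mul_add_le_exp_mul_sqrt hr ht0 ht1
    _ = ENNReal.ofReal (exp (-n * t ^ 2 / 38)) := by
        rw [← ENNReal.ofReal_pow (exp_pos _).le, ← exp_nat_mul]
        ring_nf

lemma le_or_le_neg_of_le_abs_one_div_mul_sub {n : ℕ} {S ρ c : ℝ}
    (h : c ≤ |(1 / (n : ℝ)) * S - ρ|) :
    n * (c + ρ) ≤ S ∨ n * (c - ρ) ≤ -S := by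
  rcases n.eq_zero_or_pos with rfl | hn
  · simpa using le_total 0 S
  have hn' : (0 : ℝ) < n := Nat.cast_pos.2 hn
  rcases le_abs.1 h with h | h
  · left
    calc n * (c + ρ) ≤ n * ((1 / n) * S) := by gcongr; linarith
      _ = S := by field_simp
  · right
    calc n * (c - ρ) ≤ n * -((1 / n) * S) := by gcongr; linarith
      _ = -S := by field_simp

/-- Covariance concentration: for i.i.d. samples from a centered bivariate
Gaussian with covariance `ρ_{xy}` and variances `σ_x², σ_y²`, the empirical
covariance satisfies `Pr(|ρ̂ − ρ| ≥ t σ_x σ_y) ≤ 2 exp(−nt²/38)`. -/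
theorem stmt_7 (σx σy ρ : ℝ) (hσx : 0 < σx) (hσy : 0 < σy)
    (hpd : (!![σx ^ 2, ρ; ρ, σy ^ 2] : Matrix (Fin 2) (Fin 2) ℝ).PosDef)
    (n : ℕ) (t : ℝ) (ht : t ∈ Set.Ioo (0 : ℝ) 1) :
    (Measure.pi fun _ : Fin n =>
        gaussianOfCov (!![σx ^ 2, ρ; ρ, σy ^ 2] : Matrix (Fin 2) (Fin 2) ℝ))
      {x | t * σx * σy ≤ |(1 / (n : ℝ)) * (∑ i, x i 0 * x i 1) - ρ|} ≤
      ENNReal.ofReal (2 * Real.exp (-(n : ℝ) * t ^ 2 / 38)) := by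
  obtain ⟨ht0, ht1⟩ := ht
  have hρ : ρ ^ 2 < σx ^ 2 * σy ^ 2 := by
    have := hpd.det_pos
    rw [det_fin_two_of] at this
    linarith
  have hsub :
      {x : Fin n → Fin 2 → ℝ | t * σx * σy ≤ |(1 / (n : ℝ)) * (∑ i, x i 0 * x i 1) - ρ|} ⊆
      {x | n * (t * σx * σy + 1 * ρ) ≤ ∑ i, 1 * (x i 0 * x i 1)} ∪
        {x | n * (t * σx * σy + -1 * ρ) ≤ ∑ i, -1 * (x i 0 * x i 1)} := fun x hx => by
    simpa [Finset.sum_neg_distrib, ← sub_eq_add_neg] using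
      le_or_le_neg_of_le_abs_one_div_mul_sub hx
  calc _ ≤ _ := measure_mono hsub
    _ ≤ _ := measure_union_le _ _
    _ ≤ ENNReal.ofReal (exp (-n * t ^ 2 / 38)) + ENNReal.ofReal (exp (-n * t ^ 2 / 38)) :=
        add_le_add (pi_gaussianOfCov_fin_two_tail hσx hσy hρ (by simp) ht0.le ht1.le n)
          (pi_gaussianOfCov_fin_two_tail hσx hσy hρ (by simp) ht0.le ht1.le n)
    _ = _ := by rw [← ENNReal.ofReal_add (by positivity) (by positivity), two_mul]
end

section
/- Let (X,Y) be a centered bivariate Gaussian with Var(X) = Var(Y) = 1 and Cov(X,Y) = r where |r| ≤ 1, let (X^{(1)},Y^{(1)}),…,(X^{(n)},Y^{(n)}) be i.i.d. copies, and define σ̂_X² = (1/n)∑_i (X^{(i)})², σ̂_Y² = (1/n)∑_i (Y^{(i)})², σ̂_{XY} = (1/n)∑_i X^{(i)}Y^{(i)}. For every ζ ∈ (0,1), if n ≥ 2048·log 7/ζ², then Pr(|σ̂_X² − 1| ≥ ζ) ≤ exp(−nζ²/16), Pr(|σ̂_Y² − 1| ≥ ζ) ≤ exp(−nζ²/16),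 and Pr(|σ̂_{XY} − r| ≥ ζ) ≤ exp(−nζ²/2048). -/
/-!
Write `Y = r X + √(1 - r²) Z` with `X, Z` independent standard normals. Every linear form
`a X + b Y` is then a centered normal, so all three deviations reduce to the chi-square bound
`P(|(1/n) ∑ Gᵢ² - 1| ≥ δ) ≤ 2 exp(-n δ² / 12)` for i.i.d. standard normals `Gᵢ` and `δ ≤ 1`, which
is Chernoff's bound with the moment generating function `E exp(t G²) = (1 - 2t)^(-1/2)`. For the
covariance, polarization with `e = sign r` gives
`(X + e Y)² - X² - Y² = 2 e X Y`, where `X + e Y` has variance `2 + 2|r| ∈ [2, 4]`.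
-/

open MeasureTheory ProbabilityTheory Real
open scoped NNReal

/-- The centered bivariate Gaussian with unit variances and covariance `r`
(possibly degenerate), realized as a pushforward of two independent standard
normals. -/
noncomputable def stdBivariate (r : ℝ) : Measure (ℝ × ℝ) :=
  Measure.map (fun u : ℝ × ℝ => (u.1, r * u.1 + Real.sqrt (1 - r ^ 2) * u.2))
    ((gaussianReal 0 1).prod (gaussianReal 0 1))

lemma lintegral_fin_prod_eq_pow {E : Type*} [MeasurableSpace E] {μ : Measure E}
    [IsProbabilityMeasure μ] {g : E → ENNReal} (hg : Measurable g) (n : ℕ) :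
    ∫⁻ x, ∏ i, g (x i) ∂Measure.pi (fun _ : Fin n => μ) = (∫⁻ y, g y ∂μ) ^ n := by
  rw [lintegral_prod_eq_prod_lintegral_of_indepFun _ _
    (iIndepFun_pi (X := fun _ => g) fun _ => hg.aemeasurable)
    fun i => hg.comp (measurable_pi_apply i)]
  simp_rw [fun i => (measurePreserving_eval (fun _ : Fin n => μ) i).lintegral_comp hg]
  simp

lemma measure_pi_mul_le_sum_le_pow {E : Type*} [MeasurableSpace E] {μ : Measure E}
    [IsProbabilityMeasure μ] {f : E → ℝ} (hf : Measurable f) {t : ℝ} (ht : 0 ≤ t) (a : ℝ)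
    (n : ℕ) :
    Measure.pi (fun _ : Fin n => μ) {x | n * a ≤ ∑ i, f (x i)} ≤
      (ENNReal.ofReal (exp (-(t * a))) * ∫⁻ y, ENNReal.ofReal (exp (t * f y)) ∂μ) ^ n := by
  have hmarkov := meas_ge_le_lintegral_div
    (μ := Measure.pi (fun _ : Fin n => μ)) (ε := ENNReal.ofReal (exp (t * (n * a))))
    (f := fun x => ∏ i, ENNReal.ofReal (exp (t * f (x i))))
    (Finset.measurable_prod _ fun i _ => by fun_prop).aemeasurable (by positivity)
    ENNReal.ofReal_ne_top
  have hprod : ∀ x : Fin n → E, ∏ i, ENNReal.ofReal (exp (t * f (x i))) =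
      ENNReal.ofReal (exp (t * ∑ i, f (x i))) := by
    intro x
    rw [← ENNReal.ofReal_prod_of_nonneg fun i _ => (exp_pos _).le, ← exp_sum, Finset.mul_sum]
  refine (measure_mono fun x hx => ?_).trans (hmarkov.trans_eq ?_)
  · simp only [Set.mem_ofPred_eq, hprod] at hx ⊢
    gcongr
  · rw [lintegral_fin_prod_eq_pow (g := fun y => ENNReal.ofReal (exp (t * f y))) (by fun_prop),
      div_eq_mul_inv, mul_pow, mul_comm, ← ENNReal.ofReal_pow (exp_pos _).le, ← exp_nat_mul,
      ← ENNReal.ofReal_inv_of_pos (exp_pos _), ← exp_neg]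
    ring_nf

lemma lintegral_exp_mul_sq_gaussianReal {t : ℝ} (ht : t < 1 / 2) :
    ∫⁻ x, ENNReal.ofReal (exp (t * x ^ 2)) ∂gaussianReal 0 1 =
      ENNReal.ofReal (√(1 - 2 * t))⁻¹ := by
  have hb : 0 < 1 / 2 - t := by linarith
  have hdensity : ∀ x : ℝ, gaussianPDF 0 1 x * ENNReal.ofReal (exp (t * x ^ 2)) =
      ENNReal.ofReal ((√(2 * π))⁻¹ * exp (-(1 / 2 - t) * x ^ 2)) := by
    intro x
    rw [gaussianPDF, gaussianPDFReal, ← ENNReal.ofReal_mul (by positivity), mul_assoc,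
      ← exp_add]
    congr 3
    · simp
    · push_cast; ring
  rw [gaussianReal_of_var_ne_zero _ one_ne_zero,
    lintegral_withDensity_eq_lintegral_mul _ (measurable_gaussianPDF _ _) (by fun_prop)]
  simp only [Pi.mul_apply, hdensity]
  rw [← ofReal_integral_eq_lintegral_ofReal ((integrable_exp_neg_mul_sq hb).const_mul _)
    (.of_forall fun x => by positivity), integral_const_mul, integral_gaussian]
  congr 1
  rw [← sqrt_inv, ← sqrt_inv, ← sqrt_mul (by positivity)]
  congr 1
  field_simp

lemma exp_le_of_one_le_mul_one_sub {y c : ℝ} (hy : y < 1) (h : 1 ≤ c * (1 - y)) :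
    exp y ≤ c := by
  have h1 := add_one_le_exp (-y)
  have h2 : exp y * exp (-y) = 1 := by rw [← exp_add, add_neg_cancel, exp_zero]
  nlinarith [exp_pos y]

lemma mul_inv_sqrt_le_of_sq_le {x y u : ℝ} (hy : 0 ≤ y) (hu : 0 < u) (h : x ^ 2 ≤ u * y ^ 2) :
    x * (√u)⁻¹ ≤ y := by
  rw [← div_eq_mul_inv, div_le_iff₀ (sqrt_pos.2 hu), ← sqrt_sq hy, ← sqrt_mul' _ hu.le]
  exact le_sqrt_of_sq_le (by linarith)

/-- `exp (-t (1 + δ)) · E[exp (t G²)]` at `t = δ / 6`: the per-sample Chernoff factor of the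
upper tail. -/
lemma exp_upper_tail_factor_le {δ : ℝ} (hδ0 : 0 ≤ δ) (hδ1 : δ ≤ 1) :
    exp (-(δ / 6 * (1 + δ))) * (√(1 - 2 * (δ / 6)))⁻¹ ≤ exp (-δ ^ 2 / 12) := by
  refine mul_inv_sqrt_le_of_sq_le (exp_pos _).le (by linarith) ?_
  have h : exp (-(δ / 3 + δ ^ 2 / 6)) ≤ 1 - 2 * (δ / 6) :=
    exp_le_of_one_le_mul_one_sub (by nlinarith) (by nlinarith)
  calc exp (-(δ / 6 * (1 + δ))) ^ 2 = exp (-(δ / 3 + δ ^ 2 / 6)) * exp (-δ ^ 2 / 12) ^ 2 := by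
        rw [← exp_nat_mul, ← exp_nat_mul, ← exp_add]; ring_nf
    _ ≤ (1 - 2 * (δ / 6)) * exp (-δ ^ 2 / 12) ^ 2 := by gcongr

/-- `exp (t (1 - δ)) · E[exp (-t G²)]` at `t = δ / 4`: the per-sample Chernoff factor of the
lower tail. -/
lemma exp_lower_tail_factor_le {δ : ℝ} (hδ0 : 0 ≤ δ) (hδ1 : δ ≤ 1) :
    exp (-(δ / 4 * -(1 - δ))) * (√(1 - 2 * -(δ / 4)))⁻¹ ≤ exp (-δ ^ 2 / 12) := by
  refine mul_inv_sqrt_le_of_sq_le (exp_pos _).le (by linarith) ?_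
  have h : exp (δ / 2 - δ ^ 2 / 3) ≤ 1 - 2 * -(δ / 4) :=
    exp_le_of_one_le_mul_one_sub (by nlinarith) (by nlinarith)
  calc exp (-(δ / 4 * -(1 - δ))) ^ 2 = exp (δ / 2 - δ ^ 2 / 3) * exp (-δ ^ 2 / 12) ^ 2 := by
        rw [← exp_nat_mul, ← exp_nat_mul, ← exp_add]; ring_nf
    _ ≤ (1 - 2 * -(δ / 4)) * exp (-δ ^ 2 / 12) ^ 2 := by gcongr

lemma measure_pi_gaussianReal_abs_mean_sq_sub_one_ge_le {δ : ℝ} (hδ0 : 0 ≤ δ) (hδ1 : δ ≤ 1)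
    (n : ℕ) :
    Measure.pi (fun _ : Fin n => gaussianReal 0 1) {x | δ ≤ |1 / (n : ℝ) * ∑ i, x i ^ 2 - 1|} ≤
      ENNReal.ofReal (2 * exp (-(n * δ ^ 2) / 12)) := by
  have hsplit : {x : Fin n → ℝ | δ ≤ |1 / (n : ℝ) * ∑ i, x i ^ 2 - 1|} ⊆
      {x | n * (1 + δ) ≤ ∑ i, x i ^ 2} ∪ {x | n * -(1 - δ) ≤ ∑ i, -x i ^ 2} := by
    intro x hx
    rcases n.eq_zero_or_pos with rfl | hn
    · simp
    simp only [Set.mem_ofPred_eq, Set.mem_union, Finset.sum_neg_distrib] at hx ⊢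
    have hn' : (0 : ℝ) < n := by exact_mod_cast hn
    have hmean : 1 / (n : ℝ) * ∑ i, x i ^ 2 - 1 = (∑ i, x i ^ 2 - n) / n := by
      field_simp
    rcases le_abs.1 hx with h | h
    · left; rw [hmean, le_div_iff₀ hn'] at h; linarith
    · right; rw [hmean, ← neg_div, le_div_iff₀ hn'] at h; linarith
  have hupper := measure_pi_mul_le_sum_le_pow (μ := gaussianReal 0 1) (f := fun y => y ^ 2)
    (by fun_prop) (t := δ / 6) (by positivity) (1 + δ) n
  have hlower := measure_pi_mul_le_sum_le_pow (μ := gaussianReal 0 1) (f := fun y => -y ^ 2)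
    (by fun_prop) (t := δ / 4) (by positivity) (-(1 - δ)) n
  simp only [show ∀ y : ℝ, δ / 4 * -y ^ 2 = -(δ / 4) * y ^ 2 from fun y => by ring] at hlower
  rw [lintegral_exp_mul_sq_gaussianReal (by linarith)] at hupper
  rw [lintegral_exp_mul_sq_gaussianReal (by linarith)] at hlower
  have hfactor : ∀ a b : ℝ, a * b ≤ exp (-δ ^ 2 / 12) → 0 ≤ a → 0 ≤ b →
      (ENNReal.ofReal a * ENNReal.ofReal b) ^ n ≤ ENNReal.ofReal (exp (-(n * δ ^ 2) / 12)) := by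
    intro a b hab ha hb
    rw [← ENNReal.ofReal_mul ha, ← ENNReal.ofReal_pow (by positivity),
      show -(n * δ ^ 2) / 12 = n * (-δ ^ 2 / 12) by ring, exp_nat_mul]
    gcongr
  calc _ ≤ _ := measure_mono hsplit
    _ ≤ _ := measure_union_le _ _
    _ ≤ ENNReal.ofReal (exp (-(n * δ ^ 2) / 12)) + ENNReal.ofReal (exp (-(n * δ ^ 2) / 12)) :=
        add_le_add (hupper.trans (hfactor _ _ (exp_upper_tail_factor_le hδ0 hδ1) (by positivity)
          (by positivity))) (hlower.trans (hfactor _ _ (exp_lower_tail_factor_le hδ0 hδ1)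
          (by positivity) (by positivity)))
    _ = ENNReal.ofReal (2 * exp (-(n * δ ^ 2) / 12)) := by
        rw [two_mul, ENNReal.ofReal_add (by positivity) (by positivity)]

lemma measure_pi_abs_mean_sq_sub_one_ge_le {E : Type*} [MeasurableSpace E] {ν : Measure E}
    [IsProbabilityMeasure ν] {f : E → ℝ} (hf : Measurable f) (hfν : ν.map f = gaussianReal 0 1)
    {δ : ℝ} (hδ0 : 0 ≤ δ) (hδ1 : δ ≤ 1) (n : ℕ) :
    Measure.pi (fun _ : Fin n => ν) {x | δ ≤ |1 / (n : ℝ) * ∑ i, f (x i) ^ 2 - 1|} ≤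
      ENNReal.ofReal (2 * exp (-(n * δ ^ 2) / 12)) := by
  have hset : {x : Fin n → E | δ ≤ |1 / (n : ℝ) * ∑ i, f (x i) ^ 2 - 1|} =
      (fun x i => f (x i)) ⁻¹' {y | δ ≤ |1 / (n : ℝ) * ∑ i, y i ^ 2 - 1|} := rfl
  rw [hset, ← Measure.map_apply (by fun_prop) (measurableSet_le (by fun_prop) (by fun_prop)),
    Measure.pi_map_pi fun _ => hf.aemeasurable, hfν]
  exact measure_pi_gaussianReal_abs_mean_sq_sub_one_ge_le hδ0 hδ1 n

lemma measure_pi_abs_mean_sq_sub_ge_le {E : Type*} [MeasurableSpace E] {ν : Measure E}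
    [IsProbabilityMeasure ν] {f : E → ℝ} (hf : Measurable f) {v : ℝ≥0} (hv : v ≠ 0)
    (hfν : ν.map f = gaussianReal 0 v) {δ : ℝ} (hδ0 : 0 ≤ δ) (hδ1 : δ ≤ 1) (n : ℕ) :
    Measure.pi (fun _ : Fin n => ν) {x | δ * v ≤ |1 / (n : ℝ) * ∑ i, f (x i) ^ 2 - v|} ≤
      ENNReal.ofReal (2 * exp (-(n * δ ^ 2) / 12)) := by
  have hv' : (0 : ℝ) < v := by positivity
  set g : E → ℝ := fun y => (√v)⁻¹ * f y
  have hg : ν.map g = gaussianReal 0 1 := by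
    rw [show g = (fun z => (√v)⁻¹ * z) ∘ f from rfl, ← Measure.map_map (by fun_prop) hf, hfν,
      gaussianReal_map_const_mul, mul_zero]
    congr
    ext
    simp [inv_pow, sq_sqrt hv'.le, hv'.ne']
  have hset : {x : Fin n → E | δ * v ≤ |1 / (n : ℝ) * ∑ i, f (x i) ^ 2 - v|} =
      {x | δ ≤ |1 / (n : ℝ) * ∑ i, g (x i) ^ 2 - 1|} := by
    ext x
    have : 1 / (n : ℝ) * ∑ i, f (x i) ^ 2 - v = v * (1 / (n : ℝ) * ∑ i, g (x i) ^ 2 - 1) := by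
      simp only [g, mul_pow, inv_pow, sq_sqrt hv'.le, ← Finset.mul_sum]
      field_simp
    simp only [Set.mem_ofPred_eq, this, abs_mul, abs_of_pos hv', mul_comm δ,
      mul_le_mul_iff_right₀ hv']
  rw [hset]
  exact measure_pi_abs_mean_sq_sub_one_ge_le (by fun_prop) hg hδ0 hδ1 n

lemma gaussianReal_prod_map_linear (a b : ℝ) :
    ((gaussianReal 0 1).prod (gaussianReal 0 1)).map (fun u => a * u.1 + b * u.2) =
      gaussianReal 0 (a ^ 2 + b ^ 2).toNNReal := by
  have hfst : ((gaussianReal 0 1).prod (gaussianReal 0 1)).map ((a * ·) ∘ Prod.fst) =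
      gaussianReal 0 (.mk (a ^ 2) (sq_nonneg _) * 1) := by
    rw [← Measure.map_map (by fun_prop) measurable_fst, measurePreserving_fst.map_eq,
      gaussianReal_map_const_mul, mul_zero]
  have hsnd : ((gaussianReal 0 1).prod (gaussianReal 0 1)).map ((b * ·) ∘ Prod.snd) =
      gaussianReal 0 (.mk (b ^ 2) (sq_nonneg _) * 1) := by
    rw [← Measure.map_map (by fun_prop) measurable_snd, measurePreserving_snd.map_eq,
      gaussianReal_map_const_mul, mul_zero]
  have := gaussianReal_add_gaussianReal_of_indepFun
    (indepFun_prod (X := (a * ·)) (Y := (b * ·)) (by fun_prop) (by fun_prop)) hfst hsnd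
  rw [add_zero] at this
  convert this using 2
  · rfl
  rw [← NNReal.coe_inj, Real.coe_toNNReal _ (by positivity)]
  simp

instance (r : ℝ) : IsProbabilityMeasure (stdBivariate r) :=
  Measure.isProbabilityMeasure_map (by fun_prop)

lemma stdBivariate_map_linear {r : ℝ} (hr : |r| ≤ 1) (a b : ℝ) :
    (stdBivariate r).map (fun p => a * p.1 + b * p.2) =
      gaussianReal 0 (a ^ 2 + 2 * a * b * r + b ^ 2).toNNReal := by
  have hs : √(1 - r ^ 2) ^ 2 = 1 - r ^ 2 := sq_sqrt (by nlinarith [abs_le.1 hr])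
  rw [stdBivariate, Measure.map_map (by fun_prop) (by fun_prop)]
  convert gaussianReal_prod_map_linear (a + b * r) (b * √(1 - r ^ 2)) using 2
  · ext u; simp only [Function.comp_apply]; ring
  · congr 1; rw [mul_pow, hs]; ring

lemma stdBivariate_map_fst (r : ℝ) : (stdBivariate r).map Prod.fst = gaussianReal 0 1 := by
  rw [stdBivariate, Measure.map_map measurable_fst (by fun_prop)]
  exact measurePreserving_fst.map_eq

lemma stdBivariate_map_snd {r : ℝ} (hr : |r| ≤ 1) :
    (stdBivariate r).map Prod.snd = gaussianReal 0 1 := by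
  simpa using stdBivariate_map_linear hr 0 1

lemma measure_pi_stdBivariate_abs_mean_mul_sub_ge_le {r : ℝ} (hr : |r| ≤ 1) {ζ : ℝ}
    (hζ0 : 0 ≤ ζ) (hζ2 : ζ ≤ 2) (n : ℕ) :
    Measure.pi (fun _ : Fin n => stdBivariate r)
        {x | ζ ≤ |1 / (n : ℝ) * ∑ i, (x i).1 * (x i).2 - r|} ≤
      ENNReal.ofReal (6 * exp (-(n * ζ ^ 2) / 192)) := by
  obtain ⟨e, he, her⟩ : ∃ e : ℝ, |e| = 1 ∧ e * r = |r| := by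
    rcases le_total 0 r with h | h
    · exact ⟨1, by norm_num, by simp [abs_of_nonneg h]⟩
    · exact ⟨-1, by norm_num, by simp [abs_of_nonpos h]⟩
  have he2 : e ^ 2 = 1 := by rw [← sq_abs, he, one_pow]
  set v : ℝ≥0 := (2 + 2 * |r|).toNNReal
  have hv : (v : ℝ) = 2 + 2 * |r| := Real.coe_toNNReal _ (by positivity)
  have hv0 : (0 : ℝ) < v := by rw [hv]; positivity
  have hlawW : (stdBivariate r).map (fun p => p.1 + e * p.2) = gaussianReal 0 v := by
    convert stdBivariate_map_linear hr 1 e using 3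
    · simp
    · rw [← her, he2]; ring
  have hX := measure_pi_abs_mean_sq_sub_one_ge_le measurable_fst (stdBivariate_map_fst r)
    (δ := ζ / 2) (by positivity) (by linarith) n
  have hY := measure_pi_abs_mean_sq_sub_one_ge_le measurable_snd (stdBivariate_map_snd hr)
    (δ := ζ / 2) (by positivity) (by linarith) n
  have hW := measure_pi_abs_mean_sq_sub_ge_le (by fun_prop) (NNReal.coe_pos.1 hv0).ne' hlawW
    (δ := ζ / v) (by positivity) (by rw [div_le_one hv0, hv]; linarith [abs_nonneg r]) n
  rw [div_mul_cancel₀ _ hv0.ne'] at hW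
  have hsplit : {x : Fin n → ℝ × ℝ | ζ ≤ |1 / (n : ℝ) * ∑ i, (x i).1 * (x i).2 - r|} ⊆
      {x | ζ / 2 ≤ |1 / (n : ℝ) * ∑ i, (x i).1 ^ 2 - 1|} ∪
        {x | ζ / 2 ≤ |1 / (n : ℝ) * ∑ i, (x i).2 ^ 2 - 1|} ∪
        {x | ζ ≤ |1 / (n : ℝ) * ∑ i, ((x i).1 + e * (x i).2) ^ 2 - v|} := by
    intro x hx
    simp only [Set.mem_union, Set.mem_ofPred_eq] at hx ⊢
    set A := 1 / (n : ℝ) * ∑ i, (x i).1 ^ 2 - 1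
    set B := 1 / (n : ℝ) * ∑ i, (x i).2 ^ 2 - 1
    set C := 1 / (n : ℝ) * ∑ i, (x i).1 * (x i).2 - r
    have hpolar : 1 / (n : ℝ) * ∑ i, ((x i).1 + e * (x i).2) ^ 2 - v = A + B + 2 * e * C := by
      have hsum : ∑ i, ((x i).1 + e * (x i).2) ^ 2 =
          ∑ i, (x i).1 ^ 2 + ∑ i, (x i).2 ^ 2 + 2 * e * ∑ i, (x i).1 * (x i).2 := by
        rw [Finset.mul_sum, ← Finset.sum_add_distrib, ← Finset.sum_add_distrib]
        exact Finset.sum_congr rfl fun i _ => by linear_combination (x i).2 ^ 2 * he2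
      rw [hsum, hv, ← her]
      ring
    have htri : 2 * |C| ≤ |A| + |B| + |A + B + 2 * e * C| := by
      calc 2 * |C| = |A + B + 2 * e * C - A - B| := by
            rw [show A + B + 2 * e * C - A - B = 2 * e * C by ring, abs_mul, abs_mul, he]
            norm_num
        _ ≤ |A| + |B| + |A + B + 2 * e * C| := by
            linarith [abs_sub (A + B + 2 * e * C - A) B, abs_sub (A + B + 2 * e * C) A]
    rw [hpolar]
    by_contra! h
    linarith
  have hweaken : ∀ δ, ζ / 4 ≤ δ →
      ENNReal.ofReal (2 * exp (-(n * δ ^ 2) / 12)) ≤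
        ENNReal.ofReal (2 * exp (-(n * ζ ^ 2) / 192)) := by
    intro δ hδ
    rw [show -(n * ζ ^ 2) / 192 = -(n * (ζ / 4) ^ 2) / 12 by ring]
    gcongr
  calc _ ≤ _ := measure_mono hsplit
    _ ≤ _ := measure_union_le _ _
    _ ≤ _ := add_le_add_left (measure_union_le _ _) _
    _ ≤ ENNReal.ofReal (2 * exp (-(n * ζ ^ 2) / 192)) +
          ENNReal.ofReal (2 * exp (-(n * ζ ^ 2) / 192)) +
          ENNReal.ofReal (2 * exp (-(n * ζ ^ 2) / 192)) := by
        gcongr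
        · exact hX.trans (hweaken _ (by linarith))
        · exact hY.trans (hweaken _ (by linarith))
        · exact hW.trans (hweaken _ (by rw [hv]; gcongr; linarith))
    _ = ENNReal.ofReal (6 * exp (-(n * ζ ^ 2) / 192)) := by
        rw [← ENNReal.ofReal_add (by positivity) (by positivity),
          ← ENNReal.ofReal_add (by positivity) (by positivity)]
        ring_nf

lemma mul_exp_le_exp_of_le_one_add {k x y : ℝ} (h : k ≤ 1 + (y - x)) : k * exp x ≤ exp y := by
  calc k * exp x ≤ exp (y - x) * exp x := by gcongr; linarith [add_one_le_exp (y - x)]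
    _ = exp y := by rw [← exp_add, sub_add_cancel]

/-- Concentration of sample variances and sample covariance for a standardized
bivariate Gaussian. -/
theorem stmt_15 (r : ℝ) (hr : |r| ≤ 1) (n : ℕ) (ζ : ℝ)
    (hζ : ζ ∈ Set.Ioo (0 : ℝ) 1) (hn : 2048 * Real.log 7 / ζ ^ 2 ≤ n) :
    (Measure.pi fun _ : Fin n => stdBivariate r)
        {x | ζ ≤ |(1 / (n : ℝ)) * (∑ i, (x i).1 ^ 2) - 1|} ≤
      ENNReal.ofReal (Real.exp (-(n : ℝ) * ζ ^ 2 / 16)) ∧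
    (Measure.pi fun _ : Fin n => stdBivariate r)
        {x | ζ ≤ |(1 / (n : ℝ)) * (∑ i, (x i).2 ^ 2) - 1|} ≤
      ENNReal.ofReal (Real.exp (-(n : ℝ) * ζ ^ 2 / 16)) ∧
    (Measure.pi fun _ : Fin n => stdBivariate r)
        {x | ζ ≤ |(1 / (n : ℝ)) * (∑ i, (x i).1 * (x i).2) - r|} ≤
      ENNReal.ofReal (Real.exp (-(n : ℝ) * ζ ^ 2 / 2048)) := by
  obtain ⟨hζ0, hζ1⟩ := hζ
  have hsamples : 2048 ≤ (n : ℝ) * ζ ^ 2 := by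
    have hlog7 : 1 ≤ log 7 := by
      rw [le_log_iff_exp_le (by norm_num)]; linarith [exp_one_lt_d9]
    rw [div_le_iff₀ (by positivity)] at hn
    nlinarith
  have hX := measure_pi_abs_mean_sq_sub_one_ge_le measurable_fst (stdBivariate_map_fst r)
    hζ0.le hζ1.le n
  have hY := measure_pi_abs_mean_sq_sub_one_ge_le measurable_snd (stdBivariate_map_snd hr)
    hζ0.le hζ1.le n
  have hXY := measure_pi_stdBivariate_abs_mean_mul_sub_ge_le hr hζ0.le (by linarith) n
  refine ⟨hX.trans ?_, hY.trans ?_, hXY.trans ?_⟩ <;>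
    exact ENNReal.ofReal_le_ofReal (mul_exp_le_exp_of_le_one_add (by linarith))
end

section
/- Let c > 0 with c² ≤ 1/5 and set β = √2·c. Let T be a directed tree on {1,…,d} with root r and parent map pa, and let P = N(0,Σ) be the centered Gaussian generated by the structural equation model X_r = η_r and X_k = β·X_{pa(k)} + η_k for k ≠ r, with independent noises η_k ~ N(0,1); equivalently Σ = (I−A)^{-1}(I−A)^{-⊤} where A_{k,pa(k)} = β are the only nonzero entries of A. Then: (1) P is c-strong tree-faithful to T; and (2) for every k ∈ {1,…,d}, 1 ≤ Σ_{kk} ≤ 1 + β²/(1−β²). -/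
open MeasureTheory ProbabilityTheory Matrix

/-!
Write the model as `X = B η` with `B = (1 - A)⁻¹`, so that `B x y = β ^ (depth x - depth y)` when
`y` is an ancestor of `x` and `B x y = 0` otherwise. Every covariance is then computed by walking
up the tree: `Σ x y = β Σ (pa x) y` when `x` is not an ancestor of `y`, and
`Σ x x = 1 + β² Σ (pa x) (pa x)`, so `Σ x x = 1 + β² + ⋯ + β^(2 depth x)`.

For an edge `j → k` and a third node `ℓ`, either `ℓ` lies below `k`, where all the entries entering
`ρ_{jk|ℓ}` are explicit, or `X k = β X j + η k` with `η k` independent of `X ℓ`. In the second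
case `ρ_{jk|ℓ} ≥ c` reduces to `(2 - β²) Var(X j | X ℓ) ≥ 1`, which follows from Cauchy–Schwarz
when `j` is not an ancestor of `ℓ` and from the explicit formulas when it is.
-/

open Matrix Function Finset

theorem one_le_geom_sum {R : Type*} [CommSemiring R] [PartialOrder R] [IsOrderedRing R]
    {x : R} (hx : 0 ≤ x) {n : ℕ} (hn : n ≠ 0) : 1 ≤ ∑ i ∈ range n, x ^ i := by
  obtain ⟨m, rfl⟩ := Nat.exists_eq_succ_of_ne_zero hn
  rw [geom_sum_succ]
  exact le_add_of_nonneg_left (mul_nonneg hx (sum_nonneg fun i _ => pow_nonneg hx i))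

section PartialCorrelation

variable {d : ℕ} {S : Matrix (Fin d) (Fin d) ℝ}

theorem condMatrix_comm (hS : S.IsSymm) (C : Finset (Fin d)) (x y : Fin d) :
    condMatrix S C x y = condMatrix S C y x := by
  have hM : (Matrix.of fun p q : C => S p q)⁻¹.IsSymm :=
    IsSymm.inv (IsSymm.ext fun p q => hS.apply p q)
  unfold condMatrix
  rw [hS.apply x y, Finset.sum_comm]
  congr 1
  refine Finset.sum_congr rfl fun a _ => Finset.sum_congr rfl fun b _ => ?_
  rw [hS.apply x b, hS.apply y a, hM.apply a b]
  ring

theorem pcorr_comm (hS : S.IsSymm) (j k : Fin d) (C : Finset (Fin d)) :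
    pcorr S j k C = pcorr S k j C := by
  rw [pcorr, pcorr, condMatrix_comm hS, mul_comm (condMatrix S C j j)]

theorem pcorr_empty (j k : Fin d) : pcorr S j k ∅ = S j k / √(S j j * S k k) := by
  simp [pcorr, condMatrix]

theorem condMatrix_singleton (ℓ x y : Fin d) :
    condMatrix S {ℓ} x y = S x y - S x ℓ * (S ℓ ℓ)⁻¹ * S ℓ y := by
  let _ : Unique ({ℓ} : Finset (Fin d)) :=
    ⟨⟨⟨ℓ, Finset.mem_singleton_self ℓ⟩⟩, fun ⟨a, ha⟩ => Subtype.ext (by simpa using ha)⟩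
  have hinv : (Matrix.of fun p q : ({ℓ} : Finset (Fin d)) => S p q)⁻¹ default default
      = (S ℓ ℓ)⁻¹ := by
    rw [Matrix.inv_def, Matrix.adjugate_subsingleton, Matrix.det_unique]
    simp [Matrix.smul_apply, Ring.inverse_eq_inv]
  unfold condMatrix
  rw [Fintype.sum_unique, Fintype.sum_unique, hinv]
  rfl

theorem pcorr_singleton (hS : S.IsSymm) {j k ℓ : Fin d} (hℓ : 0 < S ℓ ℓ) :
    pcorr S j k {ℓ} = (S ℓ ℓ * S j k - S j ℓ * S k ℓ) /
      √((S ℓ ℓ * S j j - S j ℓ ^ 2) * (S ℓ ℓ * S k k - S k ℓ ^ 2)) := by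
  have hcond : ∀ x y, condMatrix S {ℓ} x y = (S ℓ ℓ * S x y - S x ℓ * S y ℓ) / S ℓ ℓ := by
    intro x y
    rw [condMatrix_singleton, hS.apply y ℓ]
    field_simp
  rw [pcorr, hcond, hcond, hcond, div_mul_div_comm, Real.sqrt_div' _ (by positivity),
    Real.sqrt_mul_self hℓ.le, div_div_div_cancel_right₀ hℓ.ne', sq, sq]

theorem le_div_sqrt_of_sq_mul_le {c n m : ℝ} (hc : 0 ≤ c) (hn : 0 ≤ n) (hm : 0 < m)
    (h : c ^ 2 * m ≤ n ^ 2) : c ≤ n / √m := by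
  rw [le_div_iff₀ (Real.sqrt_pos.2 hm), ← Real.sqrt_sq hc, ← Real.sqrt_mul (sq_nonneg c),
    ← Real.sqrt_sq hn]
  exact Real.sqrt_le_sqrt h

variable {j k ℓ : Fin d} {β c : ℝ}

theorem le_pcorr_empty_of_child (hc : 0 ≤ c) (hβ : 0 ≤ β) (hβc : β ^ 2 = 2 * c ^ 2)
    (hβ1 : β ^ 2 ≤ 1) (hj : 1 ≤ S j j) (hjk : S j k = β * S j j)
    (hkk : S k k = 1 + β ^ 2 * S j j) : c ≤ pcorr S j k ∅ := by
  rw [pcorr_empty, hjk, hkk]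
  refine le_div_sqrt_of_sq_mul_le hc (by positivity) (by positivity) ?_
  have key : 1 + β ^ 2 * S j j ≤ 2 * S j j := by nlinarith
  calc c ^ 2 * (S j j * (1 + β ^ 2 * S j j))
      ≤ c ^ 2 * (S j j * (2 * S j j)) := by gcongr
    _ = (β * S j j) ^ 2 := by rw [mul_pow, hβc]; ring

theorem le_pcorr_singleton_of_child_of_descendant (hS : S.IsSymm) (hc : 0 ≤ c) (hβ : 0 ≤ β)
    (hβc : β ^ 2 = 2 * c ^ 2) (hβ5 : β ^ 2 ≤ 2 / 5) {x G : ℝ} (hx : x ^ 2 ≤ β ^ 2) (hG : 1 ≤ G)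
    (hj : 1 ≤ S j j) (hjk : S j k = β * S j j) (hkk : S k k = 1 + β ^ 2 * S j j)
    (hkℓ : S k ℓ = x * S k k) (hjℓ : S j ℓ = β * x * S j j)
    (hℓℓ : S ℓ ℓ = x ^ 2 * S k k + G) : c ≤ pcorr S j k {ℓ} := by
  set s := S j j
  have hK : 0 < S k k := by rw [hkk]; positivity
  rw [pcorr_singleton hS (by rw [hℓℓ]; positivity)]
  have hN : S ℓ ℓ * S j k - S j ℓ * S k ℓ = β * s * G := by rw [hℓℓ, hjk, hjℓ, hkℓ]; ring
  have hP : S ℓ ℓ * s - S j ℓ ^ 2 = s * (x ^ 2 + G) := by rw [hℓℓ, hjℓ, hkk]; ring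
  have hQ : S ℓ ℓ * S k k - S k ℓ ^ 2 = S k k * G := by rw [hℓℓ, hkℓ]; ring
  rw [hN, hP, hQ]
  refine le_div_sqrt_of_sq_mul_le hc (by positivity) (by positivity) ?_
  have key : (x ^ 2 + G) * S k k ≤ 2 * s * G := by
    rw [hkk]
    nlinarith [mul_nonneg (sub_nonneg.2 hj) (sub_nonneg.2 hG), sq_nonneg β,
      mul_le_mul_of_nonneg_right hx (by positivity : (0 : ℝ) ≤ 1 + β ^ 2 * s)]
  calc c ^ 2 * (s * (x ^ 2 + G) * (S k k * G))
      = c ^ 2 * s * G * ((x ^ 2 + G) * S k k) := by ring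
    _ ≤ c ^ 2 * s * G * (2 * s * G) := by gcongr
    _ = (β * s * G) ^ 2 := by rw [mul_pow, mul_pow, hβc]; ring

theorem le_pcorr_singleton_of_child_of_le_two_sub_mul (hS : S.IsSymm) (hc : 0 ≤ c) (hβ : 0 ≤ β)
    (hβc : β ^ 2 = 2 * c ^ 2) (hβ1 : β ^ 2 ≤ 1) (hjk : S j k = β * S j j)
    (hkk : S k k = 1 + β ^ 2 * S j j) (hkℓ : S k ℓ = β * S j ℓ) (hℓ : 0 < S ℓ ℓ)
    (hD : S ℓ ℓ ≤ (2 - β ^ 2) * (S ℓ ℓ * S j j - S j ℓ ^ 2)) : c ≤ pcorr S j k {ℓ} := by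
  set D := S ℓ ℓ * S j j - S j ℓ ^ 2
  have hD0 : 0 < D := by nlinarith
  rw [pcorr_singleton hS hℓ]
  have hN : S ℓ ℓ * S j k - S j ℓ * S k ℓ = β * D := by rw [hjk, hkℓ]; ring
  have hQ : S ℓ ℓ * S k k - S k ℓ ^ 2 = S ℓ ℓ + β ^ 2 * D := by rw [hkk, hkℓ]; ring
  rw [hN, hQ]
  refine le_div_sqrt_of_sq_mul_le hc (by positivity) (by positivity) ?_
  calc c ^ 2 * (D * (S ℓ ℓ + β ^ 2 * D))
      ≤ c ^ 2 * (D * (2 * D)) := by gcongr; linarith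
    _ = (β * D) ^ 2 := by rw [mul_pow, hβc]; ring

end PartialCorrelation

/-- A rooted tree given by its parent map; `parent root` is an irrelevant junk value. -/
structure RootedParentMap (α : Type*) where
  root : α
  parent : α → α
  depth : α → ℕ
  depth_root : depth root = 0
  depth_of_ne_root {a : α} : a ≠ root → depth a = depth (parent a) + 1

namespace RootedParentMap

variable {α : Type*} (T : RootedParentMap α)

theorem eq_root_of_depth_eq_zero {a : α} (h : T.depth a = 0) : a = T.root := by
  by_contra ha
  have := T.depth_of_ne_root ha
  omega

theorem parent_iterate_depth (a : α) : T.parent^[T.depth a] a = T.root := by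
  induction h : T.depth a generalizing a with
  | zero => exact T.eq_root_of_depth_eq_zero h
  | succ n ih =>
    have ha : a ≠ T.root := by rintro rfl; simp [T.depth_root] at h
    rw [iterate_succ_apply, ih]
    have := T.depth_of_ne_root ha
    omega

open Classical in
noncomputable def ofIterateEqRoot {α : Type*} (r : α) (f : α → α) (h : ∀ a, ∃ n, f^[n] a = r) :
    RootedParentMap α where
  root := r
  parent := f
  depth a := Nat.find (h a)
  depth_root := (Nat.find_eq_zero _).2 rfl
  depth_of_ne_root {a} ha := by
    obtain ⟨n, hn⟩ := Nat.exists_eq_succ_of_ne_zero (mt (Nat.find_eq_zero (h a)).1 ha)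
    have hspec := Nat.find_spec (h a)
    rw [hn, iterate_succ_apply] at hspec
    refine le_antisymm (Nat.find_min' (h a) ?_) ?_
    · rw [iterate_succ_apply]
      exact Nat.find_spec (h (f a))
    · rw [hn]
      exact Nat.succ_le_succ (Nat.find_min' _ hspec)

/-- `a` is `b` itself or one of its ancestors. -/
def IsAncestor (a b : α) : Prop :=
  ∃ n, T.parent^[n] b = a ∧ T.depth b = T.depth a + n

variable {T}

theorem IsAncestor.depth_le {a b : α} (h : T.IsAncestor a b) : T.depth a ≤ T.depth b := by
  obtain ⟨n, -, h⟩ := h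
  omega

theorem IsAncestor.eq_of_depth_le {a b : α} (h : T.IsAncestor a b)
    (hd : T.depth b ≤ T.depth a) : a = b := by
  obtain ⟨n, hn, hd'⟩ := h
  obtain rfl : n = 0 := by omega
  exact hn.symm

variable (T)

theorem isAncestor_refl (a : α) : T.IsAncestor a a := ⟨0, rfl, rfl⟩

theorem isAncestor_root (a : α) : T.IsAncestor T.root a :=
  ⟨T.depth a, T.parent_iterate_depth a, by simp [T.depth_root]⟩

theorem isAncestor_iff_of_ne_root {a b : α} (hb : b ≠ T.root) :
    T.IsAncestor a b ↔ a = b ∨ T.IsAncestor a (T.parent b) := by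
  have hd := T.depth_of_ne_root hb
  constructor
  · rintro ⟨_ | n, hn, hdn⟩
    · exact Or.inl hn.symm
    · exact Or.inr ⟨n, hn, by omega⟩
  · rintro (rfl | ⟨n, hn, hdn⟩)
    · exact T.isAncestor_refl a
    · exact ⟨n + 1, hn, by omega⟩

theorem not_isAncestor_parent {a : α} (ha : a ≠ T.root) : ¬ T.IsAncestor a (T.parent a) :=
  fun h => by have := h.depth_le; have := T.depth_of_ne_root ha; omega

open Classical in
/-- Entry `(x, y)` is the product of the edge weights along the directed path from `y` down
to `x`. -/
noncomputable def pathWeights (β : ℝ) : Matrix α α ℝ :=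
  of fun x y => if T.IsAncestor y x then β ^ (T.depth x - T.depth y) else 0

variable (β : ℝ)

theorem pathWeights_self (x : α) : T.pathWeights β x x = 1 := by
  simp [pathWeights, T.isAncestor_refl]

theorem pathWeights_of_not_isAncestor {x y : α} (h : ¬ T.IsAncestor y x) :
    T.pathWeights β x y = 0 := by
  simp [pathWeights, h]

section

variable [DecidableEq α]

noncomputable def edgeWeights : Matrix α α ℝ :=
  of fun x y => if x ≠ T.root ∧ T.parent x = y then β else 0

theorem pathWeights_root (y : α) : T.pathWeights β T.root y = (1 : Matrix α α ℝ) T.root y := by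
  by_cases h : T.IsAncestor y T.root
  · obtain rfl := h.eq_of_depth_le (by simp [T.depth_root])
    rw [pathWeights_self, one_apply_eq]
  · rw [T.pathWeights_of_not_isAncestor β h, one_apply_ne]
    rintro rfl
    exact h (T.isAncestor_refl _)

theorem pathWeights_of_ne_root {x : α} (hx : x ≠ T.root) (y : α) :
    T.pathWeights β x y = (1 : Matrix α α ℝ) x y + β * T.pathWeights β (T.parent x) y := by
  have hd := T.depth_of_ne_root hx
  by_cases hyx : y = x
  · subst hyx
    rw [pathWeights_self, one_apply_eq,
      T.pathWeights_of_not_isAncestor β (T.not_isAncestor_parent hx), mul_zero, add_zero]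
  rw [one_apply_ne (Ne.symm hyx), zero_add]
  by_cases hy : T.IsAncestor y (T.parent x)
  · have hyx' : T.IsAncestor y x := (T.isAncestor_iff_of_ne_root hx).2 (Or.inr hy)
    have := hy.depth_le
    simp only [pathWeights, of_apply, if_pos hy, if_pos hyx']
    rw [hd, Nat.sub_add_comm this, pow_succ']
  · have hyx' : ¬ T.IsAncestor y x := by
      rw [T.isAncestor_iff_of_ne_root hx]; tauto
    rw [T.pathWeights_of_not_isAncestor β hy, T.pathWeights_of_not_isAncestor β hyx', mul_zero]

end

variable [Fintype α]

/-- The covariance of the structural equation model `X k = β X (parent k) + η k` with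
independent standard normal noise `η`. -/
noncomputable def cov : Matrix α α ℝ := T.pathWeights β * (T.pathWeights β)ᵀ

theorem cov_isSymm : (T.cov β).IsSymm := isSymm_mul_transpose_self _

theorem cov_comm (x y : α) : T.cov β x y = T.cov β y x := (T.cov_isSymm β).apply y x

theorem cov_apply (x y : α) : T.cov β x y = ∑ z, T.pathWeights β x z * T.pathWeights β y z := by
  simp [cov, mul_apply]

theorem cov_sq_le_mul (x y : α) : T.cov β x y ^ 2 ≤ T.cov β x x * T.cov β y y := by
  simp only [cov_apply, ← sq]
  exact Finset.sum_mul_sq_le_sq_mul_sq _ _ _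

variable [DecidableEq α]

theorem one_sub_edgeWeights_mul_pathWeights :
    (1 - T.edgeWeights β) * T.pathWeights β = 1 := by
  ext x y
  rw [sub_mul, one_mul, Matrix.sub_apply, mul_apply]
  by_cases hx : x = T.root
  · subst hx
    simp [edgeWeights, pathWeights_root]
  · rw [Finset.sum_eq_single (T.parent x), T.pathWeights_of_ne_root β hx]
    · simp [edgeWeights, hx]
    · intro z _ hz
      simp [edgeWeights, Ne.symm hz]
    · simp

theorem inv_one_sub_edgeWeights : (1 - T.edgeWeights β)⁻¹ = T.pathWeights β :=
  inv_eq_right_inv (T.one_sub_edgeWeights_mul_pathWeights β)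

theorem cov_root_root : T.cov β T.root T.root = 1 := by
  simp [cov_apply, pathWeights_root, one_apply]

theorem cov_of_ne_root {x : α} (hx : x ≠ T.root) (y : α) :
    T.cov β x y = T.pathWeights β y x + β * T.cov β (T.parent x) y := by
  simp only [cov_apply, T.pathWeights_of_ne_root β hx, add_mul, Finset.sum_add_distrib,
    one_apply, ite_mul, one_mul, zero_mul, Finset.sum_ite_eq, Finset.mem_univ, if_true,
    Finset.mul_sum, mul_assoc]

theorem cov_of_not_isAncestor {x y : α} (hx : x ≠ T.root) (h : ¬ T.IsAncestor x y) :
    T.cov β x y = β * T.cov β (T.parent x) y := by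
  rw [T.cov_of_ne_root β hx, T.pathWeights_of_not_isAncestor β h, zero_add]

theorem cov_self_of_ne_root {x : α} (hx : x ≠ T.root) :
    T.cov β x x = 1 + β ^ 2 * T.cov β (T.parent x) (T.parent x) := by
  rw [T.cov_of_ne_root β hx, pathWeights_self, T.cov_comm β (T.parent x),
    T.cov_of_not_isAncestor β hx (T.not_isAncestor_parent hx)]
  ring

theorem cov_of_parent_iterate {x y : α} {e : ℕ} (h : T.parent^[e] y = x)
    (hd : T.depth y = T.depth x + e) : T.cov β y x = β ^ e * T.cov β x x := by
  induction e generalizing y with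
  | zero => simp_all
  | succ e ih =>
    have hy : y ≠ T.root := by rintro rfl; simp [T.depth_root] at hd
    have hyx : ¬ T.IsAncestor y x := fun h' => by have := h'.depth_le; omega
    rw [T.cov_of_not_isAncestor β hy hyx, ih h (by have := T.depth_of_ne_root hy; omega)]
    ring

theorem cov_self_of_parent_iterate {x y : α} {e : ℕ} (h : T.parent^[e] y = x)
    (hd : T.depth y = T.depth x + e) :
    T.cov β y y = (β ^ 2) ^ e * T.cov β x x + ∑ i ∈ range e, (β ^ 2) ^ i := by
  induction e generalizing y with
  | zero => simp_all
  | succ e ih =>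
    have hy : y ≠ T.root := by rintro rfl; simp [T.depth_root] at hd
    rw [T.cov_self_of_ne_root β hy, ih h (by have := T.depth_of_ne_root hy; omega),
      geom_sum_succ]
    ring

theorem cov_self_eq_geom_sum (x : α) :
    T.cov β x x = ∑ i ∈ range (T.depth x + 1), (β ^ 2) ^ i := by
  rw [T.cov_self_of_parent_iterate β (T.parent_iterate_depth x) (by simp [T.depth_root]),
    cov_root_root, mul_one, geom_sum_succ']

theorem one_le_cov_self (x : α) : 1 ≤ T.cov β x x := by
  rw [cov_self_eq_geom_sum]
  exact one_le_geom_sum (sq_nonneg β) (Nat.succ_ne_zero _)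

theorem cov_parent_self {x : α} (hx : x ≠ T.root) :
    T.cov β (T.parent x) x = β * T.cov β (T.parent x) (T.parent x) := by
  rw [T.cov_comm]
  simpa using T.cov_of_parent_iterate β (e := 1) (x := T.parent x) rfl (T.depth_of_ne_root hx)

/-- The conditional variance `Var(X j | X ℓ)` is at least `1 / (2 - β ^ 2)`. -/
theorem cov_self_le_two_sub_mul {β : ℝ} (hβ : β ^ 2 ≤ 1 / 2) {j ℓ : α} (hℓj : ℓ ≠ j) :
    T.cov β ℓ ℓ ≤ (2 - β ^ 2) * (T.cov β ℓ ℓ * T.cov β j j - T.cov β j ℓ ^ 2) := by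
  have hs := T.one_le_cov_self β j
  by_cases hjℓ : T.IsAncestor j ℓ
  · obtain ⟨b, hb, hdb⟩ := hjℓ
    have hb0 : b ≠ 0 := by rintro rfl; exact hℓj hb
    have hG := one_le_geom_sum (sq_nonneg β) hb0
    have hpow : (β ^ 2) ^ b ≤ β ^ 2 := pow_le_of_le_one (sq_nonneg β) (by linarith) hb0
    rw [T.cov_comm β j ℓ, T.cov_of_parent_iterate β hb hdb, T.cov_self_of_parent_iterate β hb hdb]
    have hD : ((β ^ 2) ^ b * T.cov β j j + ∑ i ∈ range b, (β ^ 2) ^ i) * T.cov β j j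
        - (β ^ b * T.cov β j j) ^ 2 = T.cov β j j * ∑ i ∈ range b, (β ^ 2) ^ i := by ring
    rw [hD]
    nlinarith [mul_nonneg (sub_nonneg.2 hs) (sub_nonneg.2 hG),
      mul_le_mul_of_nonneg_right hpow (by linarith : (0 : ℝ) ≤ T.cov β j j)]
  · have hj : j ≠ T.root := fun h => hjℓ (h ▸ T.isAncestor_root ℓ)
    have hL := T.one_le_cov_self β ℓ
    have hCS := T.cov_sq_le_mul β (T.parent j) ℓ
    rw [T.cov_of_not_isAncestor β hj hjℓ, T.cov_self_of_ne_root β hj]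
    have hX : T.cov β ℓ ℓ ≤ T.cov β ℓ ℓ * (1 + β ^ 2 * T.cov β (T.parent j) (T.parent j))
        - (β * T.cov β (T.parent j) ℓ) ^ 2 := by
      nlinarith [mul_nonneg (sq_nonneg β) (sub_nonneg.2 hCS)]
    nlinarith

theorem cov_self_le_one_add_div {β : ℝ} (hβ : β ^ 2 < 1) (x : α) :
    T.cov β x x ≤ 1 + β ^ 2 / (1 - β ^ 2) := by
  have hpos : 0 < 1 - β ^ 2 := by linarith
  have h : (∑ i ∈ range (T.depth x + 1), (β ^ 2) ^ i) * (1 - β ^ 2)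
      = 1 - (β ^ 2) ^ (T.depth x + 1) := geom_sum_mul_neg _ _
  rw [one_add_div hpos.ne', le_div_iff₀ hpos, cov_self_eq_geom_sum, h]
  linarith [pow_nonneg (sq_nonneg β) (T.depth x + 1)]

end RootedParentMap

namespace RootedParentMap

variable {d : ℕ} (T : RootedParentMap (Fin d)) {β c : ℝ}

theorem le_pcorr_cov_parent_empty (hc : 0 ≤ c) (hβ : 0 ≤ β) (hβc : β ^ 2 = 2 * c ^ 2)
    (hβ1 : β ^ 2 ≤ 1) {k : Fin d} (hk : k ≠ T.root) :
    c ≤ pcorr (T.cov β) (T.parent k) k ∅ :=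
  le_pcorr_empty_of_child hc hβ hβc hβ1 (T.one_le_cov_self β _) (T.cov_parent_self β hk)
    (T.cov_self_of_ne_root β hk)

theorem le_pcorr_cov_parent_singleton (hc : 0 ≤ c) (hβ : 0 ≤ β) (hβc : β ^ 2 = 2 * c ^ 2)
    (hβ5 : β ^ 2 ≤ 2 / 5) {k ℓ : Fin d} (hk : k ≠ T.root) (hℓj : ℓ ≠ T.parent k) (hℓk : ℓ ≠ k) :
    c ≤ pcorr (T.cov β) (T.parent k) k {ℓ} := by
  have hjk := T.cov_parent_self β hk
  have hkk := T.cov_self_of_ne_root β hk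
  by_cases hkℓ : T.IsAncestor k ℓ
  · obtain ⟨e, he, hde⟩ := hkℓ
    have he0 : e ≠ 0 := by rintro rfl; exact hℓk he
    have hjℓ : T.parent^[e + 1] ℓ = T.parent k := by rw [iterate_succ_apply', he]
    have hdj : T.depth ℓ = T.depth (T.parent k) + (e + 1) := by
      have := T.depth_of_ne_root hk; omega
    refine le_pcorr_singleton_of_child_of_descendant (T.cov_isSymm β) hc hβ hβc hβ5
      (x := β ^ e) ?_ (one_le_geom_sum (sq_nonneg β) he0) (T.one_le_cov_self β _) hjk hkk ?_ ?_ ?_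
    · rw [← pow_mul, mul_comm, pow_mul]
      exact pow_le_of_le_one (sq_nonneg β) (by linarith) he0
    · rw [T.cov_comm, T.cov_of_parent_iterate β he hde]
    · rw [T.cov_comm, T.cov_of_parent_iterate β hjℓ hdj, pow_succ]
      ring
    · rw [T.cov_self_of_parent_iterate β he hde]
      ring
  · exact le_pcorr_singleton_of_child_of_le_two_sub_mul (T.cov_isSymm β) hc hβ hβc (by linarith)
      hjk hkk (T.cov_of_not_isAncestor β hk hkℓ) (by linarith [T.one_le_cov_self β ℓ])
      (T.cov_self_le_two_sub_mul (by linarith) hℓj)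

theorem strongTreeFaithful_cov {E : Fin d → Fin d → Prop}
    (hE : ∀ j k, E j k ↔ k ≠ T.root ∧ T.parent k = j) (hc : 0 ≤ c) (hβ : 0 ≤ β)
    (hβc : β ^ 2 = 2 * c ^ 2) (hc5 : c ^ 2 ≤ 1 / 5) : StrongTreeFaithful c (T.cov β) E := by
  have hS := T.cov_isSymm β
  have parent_edge (k : Fin d) (hk : k ≠ T.root) :
      c ≤ pcorr (T.cov β) (T.parent k) k ∅ ∧
        ∀ ℓ, ℓ ≠ T.parent k → ℓ ≠ k → c ≤ pcorr (T.cov β) (T.parent k) k {ℓ} :=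
    ⟨T.le_pcorr_cov_parent_empty hc hβ hβc (by linarith) hk,
      fun ℓ hℓj hℓk => T.le_pcorr_cov_parent_singleton hc hβ hβc (by linarith) hk hℓj hℓk⟩
  refine ⟨?_, ?_⟩
  · rintro j k ⟨-, hjk | hkj⟩
    · obtain ⟨hk, rfl⟩ := (hE j k).1 hjk
      exact parent_edge k hk
    · obtain ⟨hj, rfl⟩ := (hE k j).1 hkj
      obtain ⟨h₀, h₁⟩ := parent_edge j hj
      exact ⟨by rwa [pcorr_comm hS], fun ℓ hℓj hℓk => by rw [pcorr_comm hS]; exact h₁ ℓ hℓk hℓj⟩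
  · rintro j ℓ k hjℓ hkℓ hjk -
    exact absurd (((hE j ℓ).1 hjℓ).2.symm.trans ((hE k ℓ).1 hkℓ).2) hjk

end RootedParentMap

theorem IsDirectedTree.exists_rootedParentMap {d : ℕ} {E : Fin d → Fin d → Prop}
    (hE : IsDirectedTree E) :
    ∃ T : RootedParentMap (Fin d), ∀ j k, E j k ↔ k ≠ T.root ∧ T.parent k = j := by
  obtain ⟨⟨-, -, htree⟩, r, hroot, hparent⟩ := hE
  let f (k : Fin d) : Fin d := if hk : k = r then r else (hparent k hk).choose
  have hf : ∀ j k, E j k ↔ k ≠ r ∧ f k = j := by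
    refine fun j k => ⟨fun h => ?_, ?_⟩
    · have hk : k ≠ r := by rintro rfl; exact hroot j h
      exact ⟨hk, by simp only [f, dif_neg hk]; exact ((hparent k hk).choose_spec.2 j h).symm⟩
    · rintro ⟨hk, rfl⟩
      simp only [f, dif_neg hk]
      exact (hparent k hk).choose_spec.1
  have step : ∀ a b, (skeleton E).Adj a b → (∃ n, f^[n] b = r) → ∃ n, f^[n] a = r := by
    rintro a b ⟨-, hab | hba⟩ ⟨n, hn⟩
    · obtain ⟨hb, rfl⟩ := (hf a b).1 hab
      obtain _ | n := n
      · exact absurd hn hb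
      · exact ⟨n, hn⟩
    · obtain ⟨-, rfl⟩ := (hf b a).1 hba
      exact ⟨n + 1, hn⟩
  have walk_reach {a b : Fin d} (w : (skeleton E).Walk a b) :
      (∃ n, f^[n] b = r) → ∃ n, f^[n] a = r := by
    induction w with
    | nil => exact id
    | cons hadj _ ih => exact fun hb => step _ _ hadj (ih hb)
  exact ⟨.ofIterateEqRoot r f fun a =>
    (htree.connected.preconnected a r).elim fun w => walk_reach w ⟨0, rfl⟩, hf⟩

/-- For the directed-tree SEM with all edge weights `β = √2·c` (with
`c² ≤ 1/5`) and unit noise variances, the resulting Gaussian is `c`-strong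
tree-faithful and all marginal variances lie in `[1, 1 + β²/(1−β²)]`. -/
theorem stmt_17 (c : ℝ) (hc : 0 < c) (hc2 : c ^ 2 ≤ 1 / 5)
    (d : ℕ) (E : Fin d → Fin d → Prop) (hE : IsDirectedTree E)
    (A : Matrix (Fin d) (Fin d) ℝ)
    (hA1 : ∀ k j, E j k → A k j = Real.sqrt 2 * c)
    (hA0 : ∀ k j, ¬ E j k → A k j = 0) :
    StrongTreeFaithful c ((1 - A)⁻¹ * ((1 - A)⁻¹)ᵀ) E ∧
    ∀ k, 1 ≤ (((1 - A)⁻¹ * ((1 - A)⁻¹)ᵀ : Matrix (Fin d) (Fin d) ℝ)) k k ∧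
      (((1 - A)⁻¹ * ((1 - A)⁻¹)ᵀ : Matrix (Fin d) (Fin d) ℝ)) k k ≤
        1 + (Real.sqrt 2 * c) ^ 2 / (1 - (Real.sqrt 2 * c) ^ 2) := by
  obtain ⟨T, hT⟩ := hE.exists_rootedParentMap
  have hA : A = T.edgeWeights (√2 * c) := by
    ext k j
    by_cases h : E j k
    · simp [RootedParentMap.edgeWeights, hA1 k j h, ← hT, h]
    · simp [RootedParentMap.edgeWeights, hA0 k j h, ← hT, h]
  have hβc : (√2 * c) ^ 2 = 2 * c ^ 2 := by rw [mul_pow, Real.sq_sqrt zero_le_two]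
  rw [hA, T.inv_one_sub_edgeWeights]
  exact ⟨T.strongTreeFaithful_cov hT hc.le (by positivity) hβc hc2, fun k =>
    ⟨T.one_le_cov_self _ k, T.cov_self_le_one_add_div (by linarith) k⟩⟩
end
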